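/- The polynomial X²(Y−X²)² does not belong to the ℂ-subalgebra of ℂ[X,Y] generated by X²Y and X²+Y; consequently, the extension ℂ[X²Y, X²+Y] ⊆ ℂ[X,Y] is not well-ramified. -/

import Mathlib

noncomputable section

open MvPolynomial

/-- The multiplicity of `Q` in the factorization of `P` equals `e`. -/
def MultIs {σ : Type} (Q P : MvPolynomial σ ℂ) (e : ℕ) : Prop :=
  Q ^ e ∣ P ∧ ¬ Q ^ (e + 1) ∣ P

/-- `RamIdx A Q e` : the contraction `QB ∩ A` is generated by an irreducible `P ∈ A`,
and `e` is the multiplicity of `Q` in the factorization of `P` in `B`. -/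
def RamIdx {σ : Type} (A : Subalgebra ℂ (MvPolynomial σ ℂ))
    (Q : MvPolynomial σ ℂ) (e : ℕ) : Prop :=
  ∃ P : A, Irreducible P ∧
    (Ideal.span {Q}).comap (algebraMap A (MvPolynomial σ ℂ)) = Ideal.span {P} ∧
    MultIs Q (P : MvPolynomial σ ℂ) e

/-- `Q` is a ramified irreducible of `B` over `A`. -/
def IsRamified {σ : Type} (A : Subalgebra ℂ (MvPolynomial σ ℂ))
    (Q : MvPolynomial σ ℂ) : Prop :=
  Irreducible Q ∧ ∃ e, RamIdx A Q e ∧ 1 < e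

/-- `RamReps A S e` : `S` is a finite set of pairwise non-associated irreducible elements of `B`,
each ramified with ramification index `e Q`, and every ramified irreducible of `B` is associated
to exactly one element of `S`. -/
def RamReps {σ : Type} (A : Subalgebra ℂ (MvPolynomial σ ℂ))
    (S : Finset (MvPolynomial σ ℂ)) (e : MvPolynomial σ ℂ → ℕ) : Prop :=
  (∀ Q ∈ S, Irreducible Q ∧ RamIdx A Q (e Q) ∧ 1 < e Q) ∧
  (∀ Q ∈ S, ∀ Q' ∈ S, Q ≠ Q' → ¬ Associated Q Q') ∧
  (∀ Q : MvPolynomial σ ℂ, IsRamified A Q → ∃! Q', Q' ∈ S ∧ Associated Q Q')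

/-- The variable `X` of `ℂ[X,Y]`. -/
def Xv : MvPolynomial (Fin 2) ℂ := X 0

/-- The variable `Y` of `ℂ[X,Y]`. -/
def Yv : MvPolynomial (Fin 2) ℂ := X 1

/-- The subalgebra `A = ℂ[X²Y, X²+Y]` of `B = ℂ[X,Y]`. -/
def A16 : Subalgebra ℂ (MvPolynomial (Fin 2) ℂ) :=
  Algebra.adjoin ℂ {Xv ^ 2 * Yv, Xv ^ 2 + Yv}

/-!
Put `u = X²Y` and `v = X² + Y`. The points `(1, -1)` and `(i, 1)` both lie over
`(u, v) = (-1, 0)`, so every element of `A` takes the same value at them, whereas `X²(Y - X²)²`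
takes the values `4` and `-4`.

`A` is the polynomial ring `ℂ[v][u]`. Let `Q² ∣ P = f(v, u)`, with `P` irreducible generating
`QB ∩ A`. Then `Q` divides `∂(P, v)/∂(X, Y) = (∂ₛf)(v, u) · 2X(Y - X²)`. Unless `Q ~ X` or
`Q ~ Y - X²`, this puts `(∂ₛf)(v, u)` into `QB ∩ A = PA`, so `f ∣ ∂ₛf` and `∂ₛf = 0`; the same
argument with `∂/∂Y` then makes `f` constant. Hence the ramified irreducibles are `X` and
`Y - X²`, both of index 2, and the product in question is `X²(Y - X²)²` up to a unit.
-/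

open scoped Polynomial

section Ramification

variable {σ : Type} {A : Subalgebra ℂ (MvPolynomial σ ℂ)} {Q Q' P P' : MvPolynomial σ ℂ}
  {e e' : ℕ}

theorem MultIs.unique (h : MultIs Q P e) (h' : MultIs Q P e') : e = e' := by
  by_contra hne
  rcases Nat.lt_or_gt_of_ne hne with hlt | hlt
  · exact h.2 ((pow_dvd_pow Q hlt).trans h'.1)
  · exact h'.2 ((pow_dvd_pow Q hlt).trans h.1)

theorem MultIs.of_associated (hQ : Associated Q Q') (hP : Associated P P') (h : MultIs Q P e) :
    MultIs Q' P' e :=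
  ⟨(hQ.pow_pow.dvd_iff_dvd_left.mp h.1).trans hP.dvd,
    fun hd => h.2 (hQ.pow_pow.dvd_iff_dvd_left.mpr (hd.trans hP.symm.dvd))⟩

theorem multIs_pow_mul {b : MvPolynomial σ ℂ} (hQ : Q ≠ 0) (hb : ¬ Q ∣ b) (n : ℕ) :
    MultIs Q (Q ^ n * b) n := by
  refine ⟨dvd_mul_right _ _, fun h => hb ?_⟩
  rwa [pow_succ, mul_dvd_mul_iff_left (pow_ne_zero n hQ)] at h

theorem RamIdx.eq_of_associated (hQ : Associated Q Q') (h : RamIdx A Q e)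
    (h' : RamIdx A Q' e') : e = e' := by
  obtain ⟨P, -, hP, hmult⟩ := h
  obtain ⟨P', -, hP', hmult'⟩ := h'
  have hPP' : Associated P P' := by
    rw [← Ideal.span_singleton_eq_span_singleton, ← hP, ← hP',
      Ideal.span_singleton_eq_span_singleton.mpr hQ]
  exact (hmult.of_associated hQ (hPP'.map A.val)).unique hmult'

theorem IsRamified.of_ramIdx (hQ : Irreducible Q) (h : RamIdx A Q e) (he : 1 < e) :
    IsRamified A Q :=
  ⟨hQ, e, h, he⟩

theorem RamReps.eq_pair [DecidableEq σ] {S : Finset (MvPolynomial σ ℂ)}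
    {eIdx : MvPolynomial σ ℂ → ℕ} {a b : MvPolynomial σ ℂ} (hS : RamReps A S eIdx)
    (hab : ¬ Associated a b) (ha : IsRamified A a) (hb : IsRamified A b)
    (hram : ∀ Q, IsRamified A Q → Associated Q a ∨ Associated Q b) :
    ∃ qa qb, S = {qa, qb} ∧ qa ≠ qb ∧ Associated a qa ∧ Associated b qb := by
  obtain ⟨hmem, -, hunique⟩ := hS
  obtain ⟨qa, ⟨hqa, haqa⟩, hqa_unique⟩ := hunique a ha
  obtain ⟨qb, ⟨hqb, hbqb⟩, hqb_unique⟩ := hunique b hb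
  refine ⟨qa, qb, ?_, ?_, haqa, hbqb⟩
  · ext Q
    refine ⟨fun hQ => ?_, fun hQ => ?_⟩
    · obtain ⟨hirr, hidx, he⟩ := hmem Q hQ
      rcases hram Q (.of_ramIdx hirr hidx he) with hQa | hQb
      · simp [hqa_unique Q ⟨hQ, hQa.symm⟩]
      · simp [hqb_unique Q ⟨hQ, hQb.symm⟩]
    · rcases Finset.mem_insert.mp hQ with rfl | hQ
      · exact hqa
      · rwa [Finset.mem_singleton.mp hQ]
  · rintro rfl
    exact hab (haqa.trans hbqb.symm)

end Ramification

theorem dvd_derivation_of_sq_dvd {R S : Type*} [CommRing R] [CommRing S] [Algebra R S]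
    (D : Derivation R S S) {q g : S} (h : q ^ 2 ∣ g) : q ∣ D g := by
  obtain ⟨h, rfl⟩ := h
  have : D (q ^ 2 * h) = q * (q * D h + 2 * h * D q) := by
    simp only [D.leibniz, D.leibniz_pow, smul_eq_mul, nsmul_eq_mul]
    ring
  exact this ▸ dvd_mul_right _ _

theorem Derivation.map_aevalTower {R S : Type*} [CommRing R] [CommRing S] [Algebra R S]
    (D : Derivation R S S) {u v : S} (hv : D v = 0) (f : R[X][X]) :
    D (Polynomial.aevalTower (Polynomial.aeval v) u f) =
      Polynomial.aevalTower (Polynomial.aeval v) u (Polynomial.derivative f) * D u := by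
  induction f using Polynomial.induction_on with
  | C c => simp [hv]
  | add p q hp hq => simp only [map_add, hp, hq, add_mul]
  | monomial n c _ =>
    simp only [map_mul, map_pow, Polynomial.aevalTower_C, Polynomial.aevalTower_X, D.leibniz,
      D.leibniz_pow, map_aeval, hv, smul_eq_mul, nsmul_eq_mul, add_tsub_cancel_right, Nat.cast_add,
      Nat.cast_one, mul_zero, add_zero, zero_mul, zero_add, Polynomial.derivative_mul,
      Polynomial.derivative_C, Polynomial.derivative_X_pow_succ, map_add, _root_.map_natCast,
      map_one]
    ring

theorem Polynomial.aeval_injective_of_natDegree_ne_zero {R : Type*} [CommRing R] [IsDomain R]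
    (p : R[X]) (hp : p.natDegree ≠ 0) : Function.Injective (Polynomial.aeval (R := R) p) :=
  transcendental_iff_injective.mp <| p.transcendental hp <| mem_nonZeroDivisors_of_ne_zero <|
    Polynomial.leadingCoeff_ne_zero.mpr (Polynomial.ne_zero_of_natDegree_gt (Nat.pos_of_ne_zero hp))

namespace A16

local notation "B" => MvPolynomial (Fin 2) ℂ

def u : B := Xv ^ 2 * Yv

def v : B := Xv ^ 2 + Yv

theorem u_mem : u ∈ A16 := Algebra.subset_adjoin (by simp [u])

theorem v_mem : v ∈ A16 := Algebra.subset_adjoin (by simp [v])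

/-- `f ↦ f(v, u)`: the coefficient variable goes to `v`, the outer variable to `u`. -/
def evalUV : ℂ[X][X] →ₐ[ℂ] B := Polynomial.aevalTower (Polynomial.aeval v) u

@[simp] theorem evalUV_X : evalUV Polynomial.X = u := Polynomial.aevalTower_X _ _

@[simp] theorem evalUV_C (c : ℂ[X]) : evalUV (Polynomial.C c) = Polynomial.aeval v c :=
  Polynomial.aevalTower_C _ _ _

theorem map_evalUV {R : Type*} [CommRing R] [Algebra ℂ R] (ρ : B →ₐ[ℂ] R) (f : ℂ[X][X]) :
    ρ (evalUV f) = f.eval₂ (ρ.comp (Polynomial.aeval v) : ℂ[X] →+* R) (ρ u) :=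
  Polynomial.hom_eval₂ f _ (ρ : B →+* R) u

theorem range_evalUV : evalUV.range = A16 := by
  refine le_antisymm ?_ (Algebra.adjoin_le ?_)
  · rintro _ ⟨f, rfl⟩
    change evalUV f ∈ A16
    induction f using Polynomial.induction_on with
    | C c =>
      rw [evalUV_C]
      exact Algebra.adjoin_le (Set.singleton_subset_iff.mpr v_mem)
        (Polynomial.aeval_mem_adjoin_singleton ℂ v)
    | add p q hp hq => rw [map_add]; exact add_mem hp hq
    | monomial n c hp =>
      rw [pow_succ, ← mul_assoc, map_mul, evalUV_X]
      exact mul_mem hp u_mem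
  · rintro _ (rfl | rfl)
    · exact ⟨Polynomial.X, evalUV_X⟩
    · exact ⟨Polynomial.C Polynomial.X, by simp [v]⟩

/-- In the coordinates `(X, v)` of `B` one has `u = v X² - X⁴`, of degree 4 in `X`. -/
theorem evalUV_injective : Function.Injective evalUV := by
  let E : B →ₐ[ℂ] ℂ[X][X] :=
    aeval ![Polynomial.X, Polynomial.C Polynomial.X - Polynomial.X ^ 2]
  let q : ℂ[X][X] := Polynomial.C Polynomial.X * Polynomial.X ^ 2 - Polynomial.X ^ 4
  have hEv : (E.comp (Polynomial.aeval v) : ℂ[X] →+* ℂ[X][X]) = Polynomial.C := by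
    refine RingHom.ext fun c => ?_
    change E (Polynomial.aeval v c) = Polynomial.C c
    have hv : E v = algebraMap ℂ[X] ℂ[X][X] Polynomial.X := by simp [E, v, Xv, Yv]
    rw [← Polynomial.aeval_algHom_apply, hv, Polynomial.aeval_algebraMap_apply,
      Polynomial.aeval_X_left_apply, Polynomial.algebraMap_eq]
  have hEu : E u = q := by
    simp only [E, q, u, Xv, Yv, map_mul, map_pow, aeval_X, Matrix.cons_val_zero,
      Matrix.cons_val_one, Matrix.cons_val_fin_one]
    ring
  have hE : ∀ f, E (evalUV f) = Polynomial.aeval q f := fun f => by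
    rw [map_evalUV, hEv, hEu, Polynomial.aeval_def, Polynomial.algebraMap_eq]
  have hq : q.natDegree ≠ 0 := by
    have : q.natDegree = 4 := by simp only [q]; compute_degree!
    omega
  intro f g hfg
  exact Polynomial.aeval_injective_of_natDegree_ne_zero q hq (by simpa [hE] using congrArg E hfg)

def polyEquiv : ℂ[X][X] ≃ₐ[ℂ] A16 :=
  (AlgEquiv.ofInjective evalUV evalUV_injective).trans (Subalgebra.equivOfEq _ _ range_evalUV)

@[simp] theorem coe_polyEquiv (f : ℂ[X][X]) : (polyEquiv f : B) = evalUV f := rfl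

theorem irreducible_polyEquiv {f : ℂ[X][X]} : Irreducible (polyEquiv f) ↔ Irreducible f :=
  MulEquiv.irreducible_iff polyEquiv.toMulEquiv

theorem dvd_of_dvd_evalUV {Q : B} {f g : ℂ[X][X]}
    (hQ : (Ideal.span {Q}).comap (algebraMap A16 B) = Ideal.span {polyEquiv f})
    (hg : Q ∣ evalUV g) : f ∣ g := by
  have hmem : polyEquiv g ∈ Ideal.span {polyEquiv f} :=
    hQ ▸ Ideal.mem_comap.mpr (Ideal.mem_span_singleton.mpr hg)
  simpa using map_dvd polyEquiv.symm (Ideal.mem_span_singleton.mp hmem)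

/-- `ρ ∘ evalUV` is `g ↦ ψ (g.eval a)` with `ψ = ρ ∘ aeval v`, so its kernel is `(X - C a)`. -/
theorem ramIdx_of_map_eq_zero {R : Type*} [CommRing R] [Algebra ℂ R] (ρ : B →ₐ[ℂ] R)
    (hρ : Function.Injective (ρ.comp (Polynomial.aeval v))) {a : ℂ[X]}
    (ha : ρ u = ρ.comp (Polynomial.aeval v) a) {Q : B} (hQ : ρ Q = 0) {e : ℕ} (he : e ≠ 0)
    (hmult : MultIs Q (evalUV (Polynomial.X - Polynomial.C a)) e) : RamIdx A16 Q e := by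
  refine ⟨polyEquiv (Polynomial.X - Polynomial.C a),
    irreducible_polyEquiv.mpr (Polynomial.irreducible_X_sub_C a), le_antisymm ?_ ?_, hmult⟩
  · intro p hp
    obtain ⟨g, rfl⟩ := polyEquiv.surjective p
    obtain ⟨c, hc⟩ := Ideal.mem_span_singleton.mp (Ideal.mem_comap.mp hp)
    have hg : ρ (evalUV g) = 0 := by
      rw [← coe_polyEquiv]
      exact (congrArg ρ hc).trans (by rw [map_mul, hQ, zero_mul])
    rw [map_evalUV, ha, ← RingHom.coe_coe (ρ.comp _), Polynomial.eval₂_hom,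
      ← map_zero (ρ.comp (Polynomial.aeval v) : ℂ[X] →+* R)] at hg
    exact Ideal.mem_span_singleton.mpr
      (map_dvd polyEquiv (Polynomial.dvd_iff_isRoot.mpr (hρ hg)))
  · rw [Ideal.span_singleton_le_iff_mem, Ideal.mem_comap, Ideal.mem_span_singleton]
    exact (dvd_pow_self Q he).trans hmult.1

theorem irreducible_Xv : Irreducible Xv := MvPolynomial.X_prime.irreducible

def shear : B ≃ₐ[ℂ] B :=
  AlgEquiv.ofAlgHom (aeval ![X 0, X 1 - X 0 ^ 2]) (aeval ![X 0, X 1 + X 0 ^ 2])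
    (by ext i; fin_cases i <;> simp)
    (by ext i; fin_cases i <;> simp)

theorem irreducible_Yv_sub : Irreducible (Yv - Xv ^ 2) := by
  have : shear Yv = Yv - Xv ^ 2 := by simp [shear, Xv, Yv]
  rw [← this]
  exact (MulEquiv.irreducible_iff shear.toMulEquiv).mpr MvPolynomial.X_prime.irreducible

/-- `g ↦ ∂(g, v)/∂(X, Y)`. -/
def jacobianV : Derivation ℂ B B := pderiv 0 - (2 * Xv) • pderiv 1

theorem jacobianV_v : jacobianV v = 0 := by
  simp [jacobianV, v, Xv, Yv, pderiv_X]

theorem jacobianV_u : jacobianV u = 2 * Xv * (Yv - Xv ^ 2) := by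
  simp only [jacobianV, u, Xv, Yv, Derivation.coe_sub, Derivation.coe_smul, Pi.sub_apply,
    Pi.smul_apply, smul_eq_mul, Derivation.leibniz, Derivation.leibniz_pow, nsmul_eq_mul, pderiv_X,
    Pi.single_eq_same, Pi.single_eq_of_ne one_ne_zero, Pi.single_eq_of_ne zero_ne_one]
  ring

theorem pderiv_one_v : pderiv 1 v = 1 := by
  simp [v, Xv, Yv, pderiv_X]

theorem isUnit_two : IsUnit (2 : B) := by
  have h := (IsUnit.mk0 (2 : ℂ) two_ne_zero).map (algebraMap ℂ B)
  rwa [map_ofNat] at h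

theorem associated_of_isRamified {Q : B} (h : IsRamified A16 Q) :
    Associated Q Xv ∨ Associated Q (Yv - Xv ^ 2) := by
  obtain ⟨hQ, e, ⟨P, hP, hcomap, hmult⟩, he⟩ := h
  obtain ⟨f, rfl⟩ := polyEquiv.surjective P
  have hf : Irreducible f := irreducible_polyEquiv.mp hP
  have hsq : Q ^ 2 ∣ evalUV f := (pow_dvd_pow Q he).trans hmult.1
  by_contra hne
  have hJ : ¬ Q ∣ 2 * Xv * (Yv - Xv ^ 2) := by
    simp only [hQ.prime.dvd_mul, not_or]
    refine ⟨⟨fun h => hQ.not_isUnit (isUnit_of_dvd_unit h isUnit_two), fun h => ?_⟩, fun h => ?_⟩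
    · exact hne (.inl (hQ.associated_of_dvd irreducible_Xv h))
    · exact hne (.inr (hQ.associated_of_dvd irreducible_Yv_sub h))
  have hf' : Polynomial.derivative f = 0 := by
    have h := dvd_derivation_of_sq_dvd jacobianV hsq
    rw [evalUV, jacobianV.map_aevalTower jacobianV_v, jacobianV_u] at h
    exact Polynomial.dvd_derivative_iff.mp
      (dvd_of_dvd_evalUV hcomap ((hQ.prime.dvd_mul.mp h).resolve_right hJ))
  obtain ⟨c, rfl⟩ : ∃ c, f = Polynomial.C c := ⟨_, Polynomial.eq_C_of_derivative_eq_zero hf'⟩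
  have hc' : Polynomial.derivative c = 0 := by
    have h := dvd_derivation_of_sq_dvd (pderiv 1) hsq
    rw [evalUV_C, Derivation.comp_aeval_eq, pderiv_one_v, smul_eq_mul, mul_one,
      ← evalUV_C] at h
    have hdvd := map_dvd Polynomial.constantCoeff (dvd_of_dvd_evalUV hcomap h)
    exact Polynomial.dvd_derivative_iff.mp (by simpa using hdvd)
  obtain ⟨a, rfl⟩ : ∃ a, c = Polynomial.C a := ⟨_, Polynomial.eq_C_of_derivative_eq_zero hc'⟩
  have ha : a ≠ 0 := by rintro rfl; simp at hf
  exact hf.not_isUnit (Polynomial.isUnit_C.mpr (Polynomial.isUnit_C.mpr (IsUnit.mk0 a ha)))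

theorem not_Xv_dvd_Yv : ¬ Xv ∣ Yv := fun h => by
  simpa [Xv, Yv] using map_dvd (aeval ![(0 : ℂ), 1]) h

theorem not_associated_Xv_Yv_sub : ¬ Associated Xv (Yv - Xv ^ 2) := fun h => by
  simpa [Xv, Yv] using map_dvd (aeval ![(0 : ℂ), 1]) h.dvd

theorem ramIdx_Xv : RamIdx A16 Xv 2 := by
  let ρ : B →ₐ[ℂ] ℂ[X] := aeval ![0, Polynomial.X]
  have hρ : ρ.comp (Polynomial.aeval v) = AlgHom.id ℂ ℂ[X] := by
    rw [← Polynomial.aeval_algHom, ← Polynomial.aeval_X_left]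
    simp [ρ, v, Xv, Yv]
  refine ramIdx_of_map_eq_zero ρ (by rw [hρ]; exact Function.injective_id) (a := 0)
    (by simp [ρ, u, Xv]) (by simp [ρ, Xv]) two_ne_zero ?_
  simpa [u] using multIs_pow_mul irreducible_Xv.ne_zero not_Xv_dvd_Yv 2

/-- `QB ∩ A` is generated by `u - v²/4 = -(Y - X²)²/4`. -/
theorem ramIdx_Yv_sub : RamIdx A16 (Yv - Xv ^ 2) 2 := by
  let ρ : B →ₐ[ℂ] ℂ[X] := aeval ![Polynomial.X, Polynomial.X ^ 2]
  have hρ : ρ.comp (Polynomial.aeval v) = Polynomial.aeval (Polynomial.C 2 * Polynomial.X ^ 2) := by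
    rw [← Polynomial.aeval_algHom]
    congr 1
    simp only [ρ, v, Xv, Yv, map_add, map_pow, aeval_X, Matrix.cons_val_zero, Matrix.cons_val_one,
      Matrix.cons_val_fin_one, map_ofNat]
    ring
  refine ramIdx_of_map_eq_zero ρ ?_ (a := Polynomial.C 4⁻¹ * Polynomial.X ^ 2) ?_
    (by simp [ρ, Xv, Yv]) two_ne_zero ?_
  · rw [hρ]
    refine Polynomial.aeval_injective_of_natDegree_ne_zero _ ?_
    rw [Polynomial.natDegree_C_mul_X_pow 2 _ two_ne_zero]
    exact two_ne_zero
  · rw [hρ]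
    simp only [ρ, u, Xv, Yv, map_mul, map_pow, aeval_X, Matrix.cons_val_zero, Matrix.cons_val_one,
      Matrix.cons_val_fin_one, Polynomial.aeval_C, Polynomial.algebraMap_eq, Polynomial.aeval_X]
    rw [mul_pow, ← mul_assoc, ← map_pow, ← map_mul]
    norm_num
    ring
  · have h4 : IsUnit (C (-4⁻¹) : B) := (IsUnit.mk0 (-4⁻¹ : ℂ) (by norm_num)).map C
    have := multIs_pow_mul irreducible_Yv_sub.ne_zero
      (fun h => irreducible_Yv_sub.not_isUnit (isUnit_of_dvd_unit h h4)) 2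
    convert this using 1
    have h : (C 4⁻¹ : B) * 4 = 1 := by rw [← map_ofNat C 4, ← map_mul]; norm_num
    simp only [map_sub, evalUV_X, evalUV_C, u, v, map_mul, map_pow, Polynomial.aeval_C,
      algebraMap_eq, Polynomial.aeval_X, C_neg]
    linear_combination (-(Xv ^ 2 * Yv)) * h

theorem not_mem_of_associated {P : B} (hP : Associated (Xv ^ 2 * (Yv - Xv ^ 2) ^ 2) P) :
    P ∉ A16 := by
  obtain ⟨w, rfl⟩ := hP
  obtain ⟨c, hc, hw⟩ := MvPolynomial.isUnit_iff_eq_C_of_isReduced.mp w.isUnit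
  have hle : A16 ≤ AlgHom.equalizer (aeval ![1, -1]) (aeval ![Complex.I, 1]) := by
    refine Algebra.adjoin_le ?_
    rintro _ (rfl | rfl) <;> simp [Xv, Yv]
  intro hmem
  have h : ((-1 - 1) ^ 2 * c : ℂ) = -((1 + 1) ^ 2 * c) := by simpa [hw, Xv, Yv] using hle hmem
  exact hc.ne_zero (by linear_combination h / 8)

end A16

theorem example_not_well_ramified :
    Xv ^ 2 * (Yv - Xv ^ 2) ^ 2 ∉ A16 ∧
    ∀ (S : Finset (MvPolynomial (Fin 2) ℂ)) (eIdx : MvPolynomial (Fin 2) ℂ → ℕ),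
      RamReps A16 S eIdx → (∏ Q ∈ S, Q ^ eIdx Q) ∉ A16 := by
  refine ⟨A16.not_mem_of_associated (Associated.refl _), fun S eIdx hS hmem => ?_⟩
  obtain ⟨qx, qy, rfl, hne, hx, hy⟩ := hS.eq_pair A16.not_associated_Xv_Yv_sub
    (.of_ramIdx A16.irreducible_Xv A16.ramIdx_Xv one_lt_two)
    (.of_ramIdx A16.irreducible_Yv_sub A16.ramIdx_Yv_sub one_lt_two)
    fun _ => A16.associated_of_isRamified
  have hex : eIdx qx = 2 := (A16.ramIdx_Xv.eq_of_associated hx (hS.1 qx (by simp)).2.1).symm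
  have hey : eIdx qy = 2 :=
    (A16.ramIdx_Yv_sub.eq_of_associated hy (hS.1 qy (by simp)).2.1).symm
  rw [Finset.prod_pair hne, hex, hey] at hmem
  exact A16.not_mem_of_associated (hx.pow_pow.mul_mul hy.pow_pow) hmem
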